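/- Compatibility of the two branches: for every z ≥ 0, ψ₋(z) = ∫_{[0, D_μ⁻¹(G_μ(−z)))} [n([s,∞)) · (1 + μ̄(s) − μ̄(G_μ⁻¹(D_μ(s))))]⁻¹ dμ(s); that is, ψ₋(z) = ψ₊(D_μ⁻¹(G_μ(−z))), where ψ₊(∞) denotes the integral of the ψ₊-integrand over all of [0,∞). -/

import Mathlib

open MeasureTheory Filter
open scoped ENNReal Topology Classical

/-- Topological support of a Borel measure on ℝ. -/
def measSupport (μ : MeasureTheory.Measure ℝ) : Set ℝ :=
  {x | ∀ U : Set ℝ, IsOpen U → x ∈ U → 0 < μ U}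

/-- `D_μ(y) = ∫_{[0,y]} n([s,∞))⁻¹ dμ(s)` for `y ≥ 0` (equal to `0` for `y < 0`). -/
noncomputable def Dmu (μ n : MeasureTheory.Measure ℝ) (y : ℝ) : ℝ≥0∞ :=
  ∫⁻ s in Set.Icc (0 : ℝ) y, (n (Set.Ici s))⁻¹ ∂μ

/-- `G_μ(x) = ∫_{[x,0]} n((−∞,s])⁻¹ dμ(s)` for `x ≤ 0` (equal to `0` for `x > 0`). -/
noncomputable def Gmu (μ n : MeasureTheory.Measure ℝ) (x : ℝ) : ℝ≥0∞ :=
  ∫⁻ s in Set.Icc x (0 : ℝ), (n (Set.Iic s))⁻¹ ∂μ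

/-- The set `{y ≥ 0 : D_μ(y) > v}`; its infimum is the right-continuous inverse
`D_μ⁻¹(v)`, with `D_μ⁻¹(v) = ∞` when the set is empty. -/
def DinvSet (μ n : MeasureTheory.Measure ℝ) (v : ℝ≥0∞) : Set ℝ :=
  {y : ℝ | 0 ≤ y ∧ v < Dmu μ n y}

/-- The set `{x ≤ 0 : G_μ(x) > v}`; its supremum is the right-continuous inverse
`G_μ⁻¹(v)`, with `G_μ⁻¹(v) = −∞` when the set is empty. -/
def GinvSet (μ n : MeasureTheory.Measure ℝ) (v : ℝ≥0∞) : Set ℝ :=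
  {x : ℝ | x ≤ 0 ∧ v < Gmu μ n x}

/-- `μ̄(D_μ⁻¹(v))`, with the convention `μ̄(∞) = 0`. -/
noncomputable def mubarDinv (μ n : MeasureTheory.Measure ℝ) (v : ℝ≥0∞) : ℝ :=
  if (DinvSet μ n v).Nonempty then (μ (Set.Ici (sInf (DinvSet μ n v)))).toReal else 0

/-- `μ̄(G_μ⁻¹(v))`, with the convention `μ̄(−∞) = 1`. -/
noncomputable def mubarGinv (μ n : MeasureTheory.Measure ℝ) (v : ℝ≥0∞) : ℝ :=
  if (GinvSet μ n v).Nonempty then (μ (Set.Ici (sSup (GinvSet μ n v)))).toReal else 1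

/-- `n([D_μ⁻¹(v),∞))`, with the convention that it is `0` when `D_μ⁻¹(v) = ∞`. -/
noncomputable def nDinv (μ n : MeasureTheory.Measure ℝ) (v : ℝ≥0∞) : ℝ≥0∞ :=
  if (DinvSet μ n v).Nonempty then n (Set.Ici (sInf (DinvSet μ n v))) else 0

/-- `n((−∞,G_μ⁻¹(v)])`, with the convention that it is `0` when `G_μ⁻¹(v) = −∞`. -/
noncomputable def nGinv (μ n : MeasureTheory.Measure ℝ) (v : ℝ≥0∞) : ℝ≥0∞ :=
  if (GinvSet μ n v).Nonempty then n (Set.Iic (sSup (GinvSet μ n v))) else 0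

/-- The integrand `[n([s,∞)) · (1 + μ̄(s) − μ̄(G_μ⁻¹(D_μ(s))))]⁻¹` of `ψ₊`. -/
noncomputable def psiPlusIntegrand (μ n : MeasureTheory.Measure ℝ) (s : ℝ) : ℝ≥0∞ :=
  (n (Set.Ici s) *
    ENNReal.ofReal (1 + (μ (Set.Ici s)).toReal - mubarGinv μ n (Dmu μ n s)))⁻¹

/-- `ψ₊(y) = ∫_{[0,y]} [n([s,∞)) · (1 + μ̄(s) − μ̄(G_μ⁻¹(D_μ(s))))]⁻¹ dμ(s)`. -/
noncomputable def psiPlus (μ n : MeasureTheory.Measure ℝ) (y : ℝ) : ℝ≥0∞ :=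
  ∫⁻ s in Set.Icc (0 : ℝ) y, psiPlusIntegrand μ n s ∂μ

/-- The integrand `[n((−∞,s]) · (1 + μ̄(D_μ⁻¹(G_μ(s))) − μ̄(s))]⁻¹` of `ψ₋`. -/
noncomputable def psiMinusIntegrand (μ n : MeasureTheory.Measure ℝ) (s : ℝ) : ℝ≥0∞ :=
  (n (Set.Iic s) *
    ENNReal.ofReal (1 + mubarDinv μ n (Gmu μ n s) - (μ (Set.Ici s)).toReal))⁻¹

/-- `ψ₋(z) = ∫_{[−z,0]} [n((−∞,s]) · (1 + μ̄(D_μ⁻¹(G_μ(s))) − μ̄(s))]⁻¹ dμ(s)`. -/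
noncomputable def psiMinus (μ n : MeasureTheory.Measure ℝ) (z : ℝ) : ℝ≥0∞ :=
  ∫⁻ s in Set.Icc (-z) (0 : ℝ), psiMinusIntegrand μ n s ∂μ

/-- The set `{y ≥ 0 : ψ₊(y) ≥ l}` whose infimum is the left-continuous inverse `φ₊(l)`. -/
def phiPlusSet (μ n : MeasureTheory.Measure ℝ) (l : ℝ) : Set ℝ :=
  {y : ℝ | 0 ≤ y ∧ ENNReal.ofReal l ≤ psiPlus μ n y}

/-- The set `{z ≥ 0 : ψ₋(z) ≥ l}` whose infimum is the left-continuous inverse `φ₋(l)`. -/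
def phiMinusSet (μ n : MeasureTheory.Measure ℝ) (l : ℝ) : Set ℝ :=
  {z : ℝ | 0 ≤ z ∧ ENNReal.ofReal l ≤ psiMinus μ n z}

/-- `φ₊(l) = inf{y ≥ 0 : ψ₊(y) ≥ l}`. -/
noncomputable def phiPlus (μ n : MeasureTheory.Measure ℝ) (l : ℝ) : ℝ :=
  sInf (phiPlusSet μ n l)

/-- `φ₋(l) = inf{z ≥ 0 : ψ₋(z) ≥ l}`. -/
noncomputable def phiMinus (μ n : MeasureTheory.Measure ℝ) (l : ℝ) : ℝ :=
  sInf (phiMinusSet μ n l)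

/-- `n([φ₊(l),∞))`, with the convention that it is `0` when `φ₊(l) = inf ∅ = ∞`. -/
noncomputable def nPhiPlus (μ n : MeasureTheory.Measure ℝ) (l : ℝ) : ℝ≥0∞ :=
  if (phiPlusSet μ n l).Nonempty then n (Set.Ici (phiPlus μ n l)) else 0

/-- `n((−∞,−φ₋(l)])`, with the convention that it is `0` when `φ₋(l) = inf ∅ = ∞`. -/
noncomputable def nPhiMinus (μ n : MeasureTheory.Measure ℝ) (l : ℝ) : ℝ≥0∞ :=
  if (phiMinusSet μ n l).Nonempty then n (Set.Iic (-(phiMinus μ n l))) else 0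

/-- `∫₀^L [n((−∞,−φ₋(s)]) + n([φ₊(s),∞))] ds` for an upper limit `L ∈ [0,∞]`. -/
noncomputable def cutInt (μ n : MeasureTheory.Measure ℝ) (L : ℝ≥0∞) : ℝ≥0∞ :=
  ∫⁻ s in {s : ℝ | 0 < s ∧ ENNReal.ofReal s < L},
    (nPhiMinus μ n s + nPhiPlus μ n s)

/-- `exp(−a)` for `a ∈ [0,∞]`, with `exp(−∞) = 0`. -/
noncomputable def expNegE (a : ℝ≥0∞) : ℝ :=
  if a = ⊤ then 0 else Real.exp (-a.toReal)

/-- `ρ(l) = exp(−∫₀^l [n((−∞,−φ₋(s)]) + n([φ₊(s),∞))] ds)`. -/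
noncomputable def rho (μ n : MeasureTheory.Measure ℝ) (l : ℝ) : ℝ≥0∞ :=
  ENNReal.ofReal (expNegE (cutInt μ n (ENNReal.ofReal l)))

open Set

/-!
Both branches are images of a single Lebesgue integral. Put
`F(t) = [1 + μ̄(D_μ⁻¹(t)) − μ̄(G_μ⁻¹(t))]⁻¹`. Since `μ` has no atoms and the weights
`n([s,∞))⁻¹`, `n((−∞,s])⁻¹` do not vanish off `0`, `D_μ` (resp. `G_μ`) increases strictly across
every interval charged by `μ`, whence `μ̄(D_μ⁻¹(D_μ(s))) = μ̄(s)` for `s ≥ 0` and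
`μ̄(G_μ⁻¹(G_μ(s))) = μ̄(s)` for `s ≤ 0`. So the `ψ₊`-integrand is `n([s,∞))⁻¹ F(D_μ(s))` and the
`ψ₋`-integrand is `n((−∞,s])⁻¹ F(G_μ(s))`. A finite atomless measure on `ℝ` pushes forward to
Lebesgue measure under its own continuous distribution function; applied to
`n([s,∞))⁻¹ dμ(s)` on `[0,y]` and `n((−∞,s])⁻¹ dμ(s)` on `[−z,0]` this gives
`ψ₊(y) = ∫₀^{D_μ(y)} F` and `ψ₋(z) = ∫₀^{G_μ(−z)} F`. Finally `D_μ(D_μ⁻¹(v)) = v` by continuity of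
`D_μ`, and if `D_μ⁻¹(G_μ(−z)) = ∞` then `D_μ(∞) = G_μ(−∞)` forces `G_μ(−z) = D_μ(∞)`.
-/

section CumulativeDistribution

variable {m : Measure ℝ} [IsFiniteMeasure m] [NullSingletonClass m]

theorem continuous_measureReal_Iic : Continuous fun s => m.real (Iic s) := by
  refine continuous_iff_continuousAt.2 fun x => ?_
  have h := (integrableOn_const (μ := m) (s := Iic (x + 1)) (C := (1 : ℝ))
    (measure_ne_top m _)).continuousOn_Iic_primitive_Iic
  simpa using h.continuousAt (Iic_mem_nhds (lt_add_one x))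

theorem measure_setOf_measureReal_Iic_le {a : ℝ} (ha : a < m.real univ) :
    m {s | m.real (Iic s) ≤ a} = ENNReal.ofReal a := by
  set T : ℝ → ℝ := fun s => m.real (Iic s)
  have hT : Continuous T := continuous_measureReal_Iic
  have hmono : Monotone T := fun x y h => measureReal_mono (Iic_subset_Iic.2 h)
  have htop : Tendsto T atTop (𝓝 (m.real univ)) :=
    (ENNReal.tendsto_toReal (measure_ne_top m univ)).comp (tendsto_measure_Iic_atTop m)
  have hbot : Tendsto T atBot (𝓝 0) := by
    have h := tendsto_measure_iInter_atBot (μ := m) (fun x => measurableSet_Iic.nullMeasurableSet)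
      (monotone_Iic (α := ℝ)) ⟨0, measure_ne_top m _⟩
    rw [iInter_Iic_eq_empty_iff.2 (by simp [not_bddBelow_univ]), measure_empty] at h
    exact (ENNReal.tendsto_toReal ENNReal.zero_ne_top).comp h
  set S := {s | T s ≤ a}
  obtain ⟨b, hb⟩ := (htop.eventually (lt_mem_nhds ha)).exists_forall_of_atTop
  have hbdd : BddAbove S := ⟨b, fun s hs => not_lt.1 fun hbs => (hb s hbs.le).not_ge hs⟩
  rcases S.eq_empty_or_nonempty with hS | hS
  · have ha0 : a ≤ 0 := not_lt.1 fun h0 => by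
      obtain ⟨s, hs⟩ := (hbot.eventually (gt_mem_nhds h0)).exists
      exact hS.subset (show s ∈ S from hs.le)
    rw [hS, measure_empty, ENNReal.ofReal_of_nonpos ha0]
  · set d := sSup S
    have hd : d ∈ S := (isClosed_le hT continuous_const).csSup_mem hS hbdd
    have hSd : S = Iic d :=
      Subset.antisymm (fun s hs => le_csSup hbdd hs) fun s hs => (hmono hs).trans hd
    have hTd : T d = a := by
      have hsub : Ioi d ⊆ {s | a ≤ T s} := fun s hs =>
        show a ≤ T s from (not_le.1 fun h => notMem_of_csSup_lt hs hbdd h).le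
      have hcl := closure_minimal hsub (isClosed_le continuous_const hT)
      rw [closure_Ioi] at hcl
      exact le_antisymm hd (hcl (mem_Ici.2 le_rfl))
    rw [hSd, ← hTd, ofReal_measureReal]

theorem map_measureReal_Iic :
    m.map (fun s => m.real (Iic s)) = volume.restrict (Ico 0 (m.real univ)) := by
  refine Measure.ext_of_Iic _ _ fun a => ?_
  rw [Measure.map_apply continuous_measureReal_Iic.measurable measurableSet_Iic,
    Measure.restrict_apply measurableSet_Iic]
  rcases lt_or_ge a (m.real univ) with ha | ha
  · have hinter : Iic a ∩ Ico 0 (m.real univ) = Icc 0 a := by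
      ext t; simp only [mem_inter_iff, mem_Iic, mem_Ico, mem_Icc]; constructor
      · exact fun h => ⟨h.2.1, h.1⟩
      · exact fun h => ⟨h.2, h.1, h.2.trans_lt ha⟩
    rw [hinter, Real.volume_Icc, sub_zero]
    exact measure_setOf_measureReal_Iic_le ha
  · have hpre : (fun s => m.real (Iic s)) ⁻¹' Iic a = univ :=
      eq_univ_of_forall fun s => (measureReal_mono (subset_univ _)).trans ha
    rw [hpre, inter_eq_right.2 fun t ht => ht.2.le.trans ha, Real.volume_Ico, sub_zero,
      ofReal_measureReal]

theorem lintegral_comp_measureReal_Iic {F : ℝ → ℝ≥0∞} (hF : Measurable F) :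
    ∫⁻ s, F (m.real (Iic s)) ∂m = ∫⁻ t in Ico 0 (m.real univ), F t := by
  rw [← map_measureReal_Iic, lintegral_map hF continuous_measureReal_Iic.measurable]

theorem lintegral_comp_measureReal_Ici {F : ℝ → ℝ≥0∞} (hF : Measurable F) :
    ∫⁻ s, F (m.real (Ici s)) ∂m = ∫⁻ t in Ico 0 (m.real univ), F t := by
  set m' := m.map Neg.neg
  have : NullSingletonClass m' := ⟨fun x => by
    rw [Measure.map_apply measurable_neg (measurableSet_singleton x), neg_preimage, neg_singleton,
      measure_singleton]⟩
  have hm' : ∀ s, m'.real (Iic s) = m.real (Ici (-s)) := fun s => by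
    rw [measureReal_def, Measure.map_apply measurable_neg measurableSet_Iic, neg_preimage, neg_Iic,
      measureReal_def]
  calc ∫⁻ s, F (m.real (Ici s)) ∂m = ∫⁻ s, F (m'.real (Iic (-s))) ∂m := by simp only [hm', neg_neg]
    _ = ∫⁻ u, F (m'.real (Iic u)) ∂m' :=
      (lintegral_map (hF.comp continuous_measureReal_Iic.measurable) measurable_neg).symm
    _ = ∫⁻ t in Ico 0 (m.real univ), F t := by
      rw [lintegral_comp_measureReal_Iic hF, measureReal_def, Measure.map_apply measurable_neg
        MeasurableSet.univ, preimage_univ, measureReal_def]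

end CumulativeDistribution

section Primitive

variable {ρ : Measure ℝ} {w : ℝ → ℝ≥0∞}

theorem withDensity_restrict_Icc_apply_Iic {a y s : ℝ} (hs : s ≤ y) :
    (ρ.withDensity w).restrict (Icc a y) (Iic s) = ∫⁻ u in Icc a s, w u ∂ρ := by
  rw [Measure.restrict_apply measurableSet_Iic,
    withDensity_apply _ (measurableSet_Iic.inter measurableSet_Icc)]
  congr 2
  ext u
  simp only [mem_inter_iff, mem_Iic, mem_Icc]
  constructor
  · exact fun h => ⟨h.2.1, h.1⟩
  · exact fun h => ⟨h.2, h.1, h.2.trans hs⟩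

theorem withDensity_restrict_Icc_apply_Ici {x b s : ℝ} (hs : x ≤ s) :
    (ρ.withDensity w).restrict (Icc x b) (Ici s) = ∫⁻ u in Icc s b, w u ∂ρ := by
  rw [Measure.restrict_apply measurableSet_Ici,
    withDensity_apply _ (measurableSet_Ici.inter measurableSet_Icc)]
  congr 2
  ext u
  simp only [mem_inter_iff, mem_Ici, mem_Icc]
  constructor
  · exact fun h => ⟨h.1, h.2.2⟩
  · exact fun h => ⟨h.1, hs.trans h.1, h.2⟩

variable [NullSingletonClass ρ]

theorem continuous_setLIntegral_Icc {a : ℝ} (hfin : ∀ y, ∫⁻ u in Icc a y, w u ∂ρ ≠ ⊤) :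
    Continuous fun y => ∫⁻ u in Icc a y, w u ∂ρ := by
  refine continuous_iff_continuousAt.2 fun c => ?_
  set m := (ρ.withDensity w).restrict (Icc a (c + 1))
  have : IsFiniteMeasure m := ⟨by
    rw [Measure.restrict_apply_univ, withDensity_apply _ measurableSet_Icc]
    exact (hfin _).lt_top⟩
  have hm : (fun y => ENNReal.ofReal (m.real (Iic y))) =ᶠ[𝓝 c]
      fun y => ∫⁻ u in Icc a y, w u ∂ρ :=
    eventually_of_mem (Iio_mem_nhds (lt_add_one c)) fun y hy => by
      change ENNReal.ofReal (m.real (Iic y)) = _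
      rw [ofReal_measureReal, withDensity_restrict_Icc_apply_Iic (le_of_lt hy)]
  exact (ENNReal.continuous_ofReal.comp continuous_measureReal_Iic).continuousAt.congr hm

theorem setLIntegral_Icc_mul_comp_primitive_left (hw : Measurable w) {F : ℝ → ℝ≥0∞}
    (hF : Measurable F) {a y : ℝ} (hfin : ∫⁻ u in Icc a y, w u ∂ρ ≠ ⊤) :
    ∫⁻ s in Icc a y, w s * F (∫⁻ u in Icc a s, w u ∂ρ).toReal ∂ρ =
      ∫⁻ t in Ico 0 (∫⁻ u in Icc a y, w u ∂ρ).toReal, F t := by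
  set m := (ρ.withDensity w).restrict (Icc a y)
  have hm : m univ = ∫⁻ u in Icc a y, w u ∂ρ := by
    rw [Measure.restrict_apply_univ, withDensity_apply _ measurableSet_Icc]
  have : IsFiniteMeasure m := ⟨hm ▸ hfin.lt_top⟩
  have hprim : Monotone fun s => ∫⁻ u in Icc a s, w u ∂ρ := fun _ _ h =>
    lintegral_mono_set (Icc_subset_Icc le_rfl h)
  calc ∫⁻ s in Icc a y, w s * F (∫⁻ u in Icc a s, w u ∂ρ).toReal ∂ρ
      = ∫⁻ s, F (∫⁻ u in Icc a s, w u ∂ρ).toReal ∂m :=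
        (setLIntegral_withDensity_eq_setLIntegral_mul ρ hw
          (hF.comp (ENNReal.measurable_toReal.comp hprim.measurable)) measurableSet_Icc).symm
    _ = ∫⁻ s, F (m.real (Iic s)) ∂m := setLIntegral_congr_fun measurableSet_Icc fun s hs => by
        rw [measureReal_def, withDensity_restrict_Icc_apply_Iic hs.2]
    _ = ∫⁻ t in Ico 0 (∫⁻ u in Icc a y, w u ∂ρ).toReal, F t := by
        rw [lintegral_comp_measureReal_Iic hF, measureReal_def, hm]

theorem setLIntegral_Icc_mul_comp_primitive_right (hw : Measurable w) {F : ℝ → ℝ≥0∞}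
    (hF : Measurable F) {x b : ℝ} (hfin : ∫⁻ u in Icc x b, w u ∂ρ ≠ ⊤) :
    ∫⁻ s in Icc x b, w s * F (∫⁻ u in Icc s b, w u ∂ρ).toReal ∂ρ =
      ∫⁻ t in Ico 0 (∫⁻ u in Icc x b, w u ∂ρ).toReal, F t := by
  set m := (ρ.withDensity w).restrict (Icc x b)
  have hm : m univ = ∫⁻ u in Icc x b, w u ∂ρ := by
    rw [Measure.restrict_apply_univ, withDensity_apply _ measurableSet_Icc]
  have : IsFiniteMeasure m := ⟨hm ▸ hfin.lt_top⟩
  have hprim : Antitone fun s => ∫⁻ u in Icc s b, w u ∂ρ := fun _ _ h =>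
    lintegral_mono_set (Icc_subset_Icc h le_rfl)
  calc ∫⁻ s in Icc x b, w s * F (∫⁻ u in Icc s b, w u ∂ρ).toReal ∂ρ
      = ∫⁻ s, F (∫⁻ u in Icc s b, w u ∂ρ).toReal ∂m :=
        (setLIntegral_withDensity_eq_setLIntegral_mul ρ hw
          (hF.comp (ENNReal.measurable_toReal.comp hprim.measurable)) measurableSet_Icc).symm
    _ = ∫⁻ s, F (m.real (Ici s)) ∂m := setLIntegral_congr_fun measurableSet_Icc fun s hs => by
        rw [measureReal_def, withDensity_restrict_Icc_apply_Ici hs.1]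
    _ = ∫⁻ t in Ico 0 (∫⁻ u in Icc x b, w u ∂ρ).toReal, F t := by
        rw [lintegral_comp_measureReal_Ici hF, measureReal_def, hm]

end Primitive

section Support

theorem measSupport_eq_support (μ : Measure ℝ) : measSupport μ = μ.support := by
  ext x
  simp only [measSupport, Measure.support_eq_forall_isOpen, mem_ofPred_eq]
  exact forall_congr' fun _ => imp.swap

variable {ρ : Measure ℝ} [IsFiniteMeasure ρ] {f : ℝ → ℝ≥0∞}

theorem setLIntegral_Icc_ne_top_of_monotone_or_antitone (hf : Monotone f ∨ Antitone f)
    (hfin : ∀ x ∈ ρ.support, f x ≠ ⊤) (a b : ℝ) : ∫⁻ x in Icc a b, f x ∂ρ ≠ ⊤ := by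
  set K := Icc a b ∩ ρ.support
  have hK : IsCompact K := isCompact_Icc.inter_right Measure.isClosed_support
  rcases K.eq_empty_or_nonempty with hK0 | hKne
  · have : ρ (Icc a b) = 0 :=
      measure_mono_null (fun x hx hxs => hK0.subset ⟨hx, hxs⟩) Measure.measure_compl_support
    rw [setLIntegral_measure_zero _ _ this]
    exact ENNReal.zero_ne_top
  · have hle : ∀ᵐ x ∂ρ.restrict (Icc a b), f x ≤ max (f (sInf K)) (f (sSup K)) := by
      filter_upwards [ae_restrict_mem measurableSet_Icc,
        ae_restrict_of_ae Measure.support_mem_ae] with x hx hxs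
      rcases hf with hf | hf
      · exact le_max_of_le_right (hf (le_csSup hK.bddAbove ⟨hx, hxs⟩))
      · exact le_max_of_le_left (hf (csInf_le hK.bddBelow ⟨hx, hxs⟩))
    refine ne_top_of_le_ne_top ?_ (lintegral_mono_ae hle)
    rw [setLIntegral_const]
    exact ENNReal.mul_ne_top (max_ne_top (hfin _ (hK.sInf_mem hKne).2)
      (hfin _ (hK.sSup_mem hKne).2)) (measure_ne_top _ _)

end Support

theorem measure_eq_zero_of_forall_measure_Ioc {ρ : Measure ℝ} {s : ℝ} {U : Set ℝ}
    (h : ∀ x ∈ U, s < x ∧ ∃ y, x < y ∧ ρ (Ioc s y) = 0) : ρ U = 0 :=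
  measure_null_of_locally_null U fun x hx => by
    obtain ⟨hsx, y, hxy, hy⟩ := h x hx
    exact ⟨Ioc s y, mem_nhdsWithin_of_mem_nhds (Ioc_mem_nhds hsx hxy), hy⟩

theorem measure_eq_zero_of_forall_measure_Ico {ρ : Measure ℝ} {s : ℝ} {U : Set ℝ}
    (h : ∀ x ∈ U, x < s ∧ ∃ y, y < x ∧ ρ (Ico y s) = 0) : ρ U = 0 :=
  measure_null_of_locally_null U fun x hx => by
    obtain ⟨hxs, y, hyx, hy⟩ := h x hx
    exact ⟨Ico y s, mem_nhdsWithin_of_mem_nhds (Ico_mem_nhds hyx hxs), hy⟩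

theorem measure_Ici_eq_of_measure_Ioo_eq_zero {ρ : Measure ℝ} [NullSingletonClass ρ] {s c : ℝ}
    (hsc : s ≤ c) (h : ρ (Ioo s c) = 0) : ρ (Ici s) = ρ (Ici c) := by
  rw [← Ico_union_Ici_eq_Ici hsc]
  exact measure_congr (union_ae_eq_right_of_ae_eq_empty
    (ae_eq_empty.2 (measure_congr Ioo_ae_eq_Ico |>.symm.trans h)))

theorem iUnion_Ico_toReal_of_monotone {f : ℝ → ℝ≥0∞} (hf : Monotone f)
    (hsup : (⨆ y, f y) ≠ ⊤) : ⋃ k : ℕ, Ico 0 (f k).toReal = Ico 0 (⨆ y, f y).toReal := by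
  ext t
  simp only [mem_iUnion, mem_Ico]
  constructor
  · rintro ⟨k, ht0, htk⟩
    exact ⟨ht0, htk.trans_le (ENNReal.toReal_mono hsup (le_iSup f k))⟩
  · rintro ⟨ht0, ht⟩
    obtain ⟨y, hy⟩ := lt_iSup_iff.1 ((ENNReal.ofReal_lt_iff_lt_toReal ht0 hsup).2 ht)
    obtain ⟨k, hk⟩ := exists_nat_ge y
    refine ⟨k, ht0, (ENNReal.ofReal_lt_iff_lt_toReal ht0 ?_).1 (hy.trans_le (hf hk))⟩
    exact ne_top_of_le_ne_top hsup (le_iSup f _)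

/-- The common density of `ψ₊` and `ψ₋` with respect to `dD_μ` and `dG_μ`. -/
noncomputable def psiDensity (μ n : Measure ℝ) (t : ℝ) : ℝ≥0∞ :=
  (ENNReal.ofReal (1 + mubarDinv μ n (ENNReal.ofReal t) - mubarGinv μ n (ENNReal.ofReal t)))⁻¹

section Branches

variable (μ n : Measure ℝ)

theorem Dmu_mono : Monotone (Dmu μ n) :=
  fun _ _ h => lintegral_mono_set (Icc_subset_Icc le_rfl h)

theorem Gmu_anti : Antitone (Gmu μ n) :=
  fun _ _ h => lintegral_mono_set (Icc_subset_Icc h le_rfl)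

theorem measurable_inv_measure_Ici : Measurable fun s : ℝ => (n (Ici s))⁻¹ :=
  (Antitone.measurable fun _ _ h => measure_mono (Ici_subset_Ici.2 h)).inv

theorem measurable_inv_measure_Iic : Measurable fun s : ℝ => (n (Iic s))⁻¹ :=
  (Monotone.measurable fun _ _ h => measure_mono (Iic_subset_Iic.2 h)).inv

theorem mubarDinv_anti [IsFiniteMeasure μ] : Antitone (mubarDinv μ n) := by
  intro v v' hvv'
  have hsub : DinvSet μ n v' ⊆ DinvSet μ n v := fun y hy => ⟨hy.1, hvv'.trans_lt hy.2⟩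
  unfold mubarDinv
  split_ifs with h' h
  · exact ENNReal.toReal_mono (measure_ne_top μ _)
      (measure_mono (Ici_subset_Ici.2 (csInf_le_csInf ⟨0, fun _ hy => hy.1⟩ h' hsub)))
  · exact absurd (h'.mono hsub) h
  · exact ENNReal.toReal_nonneg
  · exact le_rfl

theorem mubarGinv_mono [IsProbabilityMeasure μ] : Monotone (mubarGinv μ n) := by
  intro v v' hvv'
  have hsub : GinvSet μ n v' ⊆ GinvSet μ n v := fun x hx => ⟨hx.1, hvv'.trans_lt hx.2⟩
  unfold mubarGinv
  split_ifs with h h' h''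
  · exact ENNReal.toReal_mono (measure_ne_top μ _)
      (measure_mono (Ici_subset_Ici.2 (csSup_le_csSup ⟨0, fun _ hx => hx.1⟩ h' hsub)))
  · exact ENNReal.toReal_le_of_le_ofReal zero_le_one (ENNReal.ofReal_one ▸ prob_le_one)
  · exact absurd (h''.mono hsub) h
  · exact le_rfl

theorem measurable_psiDensity [IsProbabilityMeasure μ] : Measurable (psiDensity μ n) := by
  have hD := (mubarDinv_anti μ n).comp_monotone fun _ _ h => ENNReal.ofReal_le_ofReal h
  have hG := (mubarGinv_mono μ n).comp fun _ _ h => ENNReal.ofReal_le_ofReal h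
  exact ((measurable_const.add hD.measurable).sub hG.measurable).ennreal_ofReal.inv

theorem measure_Ioc_eq_zero_of_Dmu_le (hn : ∀ u, 0 < u → n (Ici u) ≠ ⊤) {s y : ℝ} (hs : 0 ≤ s)
    (hsy : s ≤ y) (hfin : Dmu μ n s ≠ ⊤) (hle : Dmu μ n y ≤ Dmu μ n s) : μ (Ioc s y) = 0 := by
  have hsplit : Dmu μ n y = Dmu μ n s + ∫⁻ u in Ioc s y, (n (Ici u))⁻¹ ∂μ := by
    rw [Dmu, Dmu, ← Icc_union_Ioc_eq_Icc hs hsy, lintegral_union measurableSet_Ioc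
      (disjoint_left.2 fun u hu hu' => hu'.1.not_ge hu.2)]
  have h0 : ∫⁻ u in Ioc s y, (n (Ici u))⁻¹ ∂μ = 0 := by
    rw [hsplit] at hle
    exact nonpos_iff_eq_zero.1 (ENNReal.le_of_add_le_add_left hfin (by rwa [add_zero]))
  rw [setLIntegral_eq_zero_iff measurableSet_Ioc (measurable_inv_measure_Ici n)] at h0
  refine measure_eq_zero_iff_ae_notMem.2 (h0.mono fun u hu hmem => ?_)
  exact ENNReal.inv_ne_zero.2 (hn u (hs.trans_lt hmem.1)) (hu hmem)

theorem measure_Ico_eq_zero_of_Gmu_le (hn : ∀ u < 0, n (Iic u) ≠ ⊤) {x s : ℝ} (hs : s ≤ 0)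
    (hxs : x ≤ s) (hfin : Gmu μ n s ≠ ⊤) (hle : Gmu μ n x ≤ Gmu μ n s) : μ (Ico x s) = 0 := by
  have hsplit : Gmu μ n x = Gmu μ n s + ∫⁻ u in Ico x s, (n (Iic u))⁻¹ ∂μ := by
    rw [Gmu, Gmu, ← Ico_union_Icc_eq_Icc hxs hs, lintegral_union measurableSet_Icc
      (disjoint_left.2 fun u hu hu' => hu.2.not_ge hu'.1), add_comm]
  have h0 : ∫⁻ u in Ico x s, (n (Iic u))⁻¹ ∂μ = 0 := by
    rw [hsplit] at hle
    exact nonpos_iff_eq_zero.1 (ENNReal.le_of_add_le_add_left hfin (by rwa [add_zero]))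
  rw [setLIntegral_eq_zero_iff measurableSet_Ico (measurable_inv_measure_Iic n)] at h0
  refine measure_eq_zero_iff_ae_notMem.2 (h0.mono fun u hu hmem => ?_)
  exact ENNReal.inv_ne_zero.2 (hn u (hmem.2.trans_le hs)) (hu hmem)

theorem Dmu_ne_top [IsFiniteMeasure μ] (hsupp : ∀ x ∈ μ.support, 0 < n (Ici x)) (y : ℝ) :
    Dmu μ n y ≠ ⊤ :=
  setLIntegral_Icc_ne_top_of_monotone_or_antitone
    (.inl fun _ _ h => ENNReal.inv_le_inv.2 (measure_mono (Ici_subset_Ici.2 h)))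
    (fun x hx => ENNReal.inv_ne_top.2 (hsupp x hx).ne') 0 y

theorem Gmu_ne_top [IsFiniteMeasure μ] (hsupp : ∀ x ∈ μ.support, 0 < n (Iic x)) (x : ℝ) :
    Gmu μ n x ≠ ⊤ :=
  setLIntegral_Icc_ne_top_of_monotone_or_antitone
    (.inr fun _ _ h => ENNReal.inv_le_inv.2 (measure_mono (Iic_subset_Iic.2 h)))
    (fun x hx => ENNReal.inv_ne_top.2 (hsupp x hx).ne') x 0

theorem mubarDinv_Dmu [IsFiniteMeasure μ] [NullSingletonClass μ]
    (hsupp : ∀ x ∈ μ.support, 0 < n (Ici x)) (hn : ∀ u, 0 < u → n (Ici u) ≠ ⊤) {s : ℝ}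
    (hs : 0 ≤ s) : mubarDinv μ n (Dmu μ n s) = (μ (Ici s)).toReal := by
  set S := DinvSet μ n (Dmu μ n s)
  have hnull : ∀ y, s < y → y ∉ S → μ (Ioc s y) = 0 := fun y hsy hy =>
    measure_Ioc_eq_zero_of_Dmu_le μ n hn hs hsy.le (Dmu_ne_top μ n hsupp s)
      (not_lt.1 fun h => hy ⟨hs.trans hsy.le, h⟩)
  rw [mubarDinv]
  split_ifs with hS
  · have hbdd : BddBelow S := ⟨0, fun _ hy => hy.1⟩
    have hsc : s ≤ sInf S := le_csInf hS fun y hy => ((Dmu_mono μ n).reflect_lt hy.2).le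
    have hIoo : μ (Ioo s (sInf S)) = 0 := measure_eq_zero_of_forall_measure_Ioc fun x hx => by
      obtain ⟨y, hxy, hyc⟩ := exists_between hx.2
      exact ⟨hx.1, y, hxy, hnull y (hx.1.trans hxy) (notMem_of_lt_csInf hyc hbdd)⟩
    rw [measure_Ici_eq_of_measure_Ioo_eq_zero hsc hIoo]
  · have hIoi : μ (Ioi s) = 0 := measure_eq_zero_of_forall_measure_Ioc fun x hx =>
      ⟨hx, x + 1, lt_add_one x, hnull _ (hx.trans (lt_add_one x)) fun hy => hS ⟨_, hy⟩⟩
    rw [← measure_congr Ioi_ae_eq_Ici, hIoi, ENNReal.toReal_zero]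

theorem mubarGinv_Gmu [IsProbabilityMeasure μ] [NullSingletonClass μ]
    (hsupp : ∀ x ∈ μ.support, 0 < n (Iic x)) (hn : ∀ u < 0, n (Iic u) ≠ ⊤) {s : ℝ}
    (hs : s ≤ 0) : mubarGinv μ n (Gmu μ n s) = (μ (Ici s)).toReal := by
  set S := GinvSet μ n (Gmu μ n s)
  have hnull : ∀ x, x < s → x ∉ S → μ (Ico x s) = 0 := fun x hxs hx =>
    measure_Ico_eq_zero_of_Gmu_le μ n hn hs hxs.le (Gmu_ne_top μ n hsupp s)
      (not_lt.1 fun h => hx ⟨hxs.le.trans hs, h⟩)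
  rw [mubarGinv]
  split_ifs with hS
  · have hbdd : BddAbove S := ⟨0, fun _ hx => hx.1⟩
    have hcs : sSup S ≤ s := csSup_le hS fun x hx => ((Gmu_anti μ n).reflect_lt hx.2).le
    have hIoo : μ (Ioo (sSup S) s) = 0 := measure_eq_zero_of_forall_measure_Ico fun x hx => by
      obtain ⟨y, hcy, hyx⟩ := exists_between hx.1
      exact ⟨hx.2, y, hyx, hnull y (hyx.trans hx.2) (notMem_of_csSup_lt hcy hbdd)⟩
    rw [measure_Ici_eq_of_measure_Ioo_eq_zero hcs hIoo]
  · have hIio : μ (Iio s) = 0 := measure_eq_zero_of_forall_measure_Ico fun x hx =>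
      ⟨hx, x - 1, sub_one_lt x, hnull _ ((sub_one_lt x).trans hx) fun hy => hS ⟨_, hy⟩⟩
    rw [← compl_Iio, (prob_compl_eq_one_iff measurableSet_Iio).2 hIio, ENNReal.toReal_one]

theorem Dmu_sInf_DinvSet (hcont : Continuous (Dmu μ n)) {v : ℝ≥0∞}
    (hS : (DinvSet μ n v).Nonempty) : Dmu μ n (sInf (DinvSet μ n v)) = v := by
  set c := sInf (DinvSet μ n v)
  have hbdd : BddBelow (DinvSet μ n v) := ⟨0, fun _ hy => hy.1⟩
  apply le_antisymm
  · refine le_of_tendsto (hcont.continuousAt.mono_left (nhdsWithin_le_nhds (s := Iio c)))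
      (eventually_nhdsWithin_of_forall fun t ht => ?_)
    rcases lt_or_ge t 0 with ht0 | ht0
    · rw [Dmu, Icc_eq_empty_of_lt ht0, Measure.restrict_empty, lintegral_zero_measure]
      exact zero_le
    · exact not_lt.1 fun h => notMem_of_lt_csInf ht hbdd ⟨ht0, h⟩
  · refine ge_of_tendsto (hcont.continuousAt.mono_left (nhdsWithin_le_nhds (s := Ioi c)))
      (eventually_nhdsWithin_of_forall fun t ht => ?_)
    obtain ⟨y, hy, hyt⟩ := exists_lt_of_csInf_lt hS ht
    exact (hy.2.trans_le (Dmu_mono μ n hyt.le)).le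

theorem psiPlusIntegrand_eq_mul_psiDensity [IsFiniteMeasure μ] [NullSingletonClass μ]
    (hsupp : ∀ x ∈ μ.support, 0 < n (Ici x))
    (hn : ∀ u, 0 < u → n (Ici u) ≠ ⊤) {s : ℝ} (hs : 0 < s) :
    psiPlusIntegrand μ n s = (n (Ici s))⁻¹ * psiDensity μ n (Dmu μ n s).toReal := by
  rw [psiPlusIntegrand, psiDensity, ENNReal.ofReal_toReal (Dmu_ne_top μ n hsupp s),
    mubarDinv_Dmu μ n hsupp hn hs.le, ENNReal.mul_inv (Or.inr ENNReal.ofReal_ne_top)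
      (Or.inl (hn s hs))]

theorem psiMinusIntegrand_eq_mul_psiDensity [IsProbabilityMeasure μ] [NullSingletonClass μ]
    (hsupp : ∀ x ∈ μ.support, 0 < n (Iic x))
    (hn : ∀ u < 0, n (Iic u) ≠ ⊤) {s : ℝ} (hs : s < 0) :
    psiMinusIntegrand μ n s = (n (Iic s))⁻¹ * psiDensity μ n (Gmu μ n s).toReal := by
  rw [psiMinusIntegrand, psiDensity, ENNReal.ofReal_toReal (Gmu_ne_top μ n hsupp s),
    mubarGinv_Gmu μ n hsupp hn hs.le, ENNReal.mul_inv (Or.inr ENNReal.ofReal_ne_top)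
      (Or.inl (hn s hs))]

theorem setLIntegral_Icc_psiPlusIntegrand [IsProbabilityMeasure μ] [NullSingletonClass μ]
    (hsupp : ∀ x ∈ μ.support, 0 < n (Ici x))
    (hn : ∀ u, 0 < u → n (Ici u) ≠ ⊤) (y : ℝ) :
    ∫⁻ s in Icc 0 y, psiPlusIntegrand μ n s ∂μ =
      ∫⁻ t in Ico 0 (Dmu μ n y).toReal, psiDensity μ n t := by
  calc ∫⁻ s in Icc 0 y, psiPlusIntegrand μ n s ∂μ
      = ∫⁻ s in Icc 0 y, (n (Ici s))⁻¹ * psiDensity μ n (Dmu μ n s).toReal ∂μ := by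
        refine setLIntegral_congr_fun_ae measurableSet_Icc ?_
        filter_upwards [Measure.ae_ne μ 0] with s hs0 hs
        exact psiPlusIntegrand_eq_mul_psiDensity μ n hsupp hn (hs.1.lt_of_ne hs0.symm)
    _ = ∫⁻ t in Ico 0 (Dmu μ n y).toReal, psiDensity μ n t :=
        setLIntegral_Icc_mul_comp_primitive_left (measurable_inv_measure_Ici n)
          (measurable_psiDensity μ n) (Dmu_ne_top μ n hsupp y)

theorem psiMinus_eq_setLIntegral_psiDensity [IsProbabilityMeasure μ] [NullSingletonClass μ]
    (hsupp : ∀ x ∈ μ.support, 0 < n (Iic x))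
    (hn : ∀ u < 0, n (Iic u) ≠ ⊤) (z : ℝ) :
    psiMinus μ n z = ∫⁻ t in Ico 0 (Gmu μ n (-z)).toReal, psiDensity μ n t := by
  calc psiMinus μ n z
      = ∫⁻ s in Icc (-z) 0, (n (Iic s))⁻¹ * psiDensity μ n (Gmu μ n s).toReal ∂μ := by
        refine setLIntegral_congr_fun_ae measurableSet_Icc ?_
        filter_upwards [Measure.ae_ne μ 0] with s hs0 hs
        exact psiMinusIntegrand_eq_mul_psiDensity μ n hsupp hn (hs.2.lt_of_ne hs0)
    _ = ∫⁻ t in Ico 0 (Gmu μ n (-z)).toReal, psiDensity μ n t :=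
        setLIntegral_Icc_mul_comp_primitive_right (measurable_inv_measure_Iic n)
          (measurable_psiDensity μ n) (Gmu_ne_top μ n hsupp (-z))

theorem setLIntegral_Ici_psiPlusIntegrand [IsProbabilityMeasure μ] [NullSingletonClass μ]
    (hsupp : ∀ x ∈ μ.support, 0 < n (Ici x))
    (hn : ∀ u, 0 < u → n (Ici u) ≠ ⊤) (hsup : (⨆ y, Dmu μ n y) ≠ ⊤) :
    ∫⁻ s in Ici 0, psiPlusIntegrand μ n s ∂μ =
      ∫⁻ t in Ico 0 (⨆ y, Dmu μ n y).toReal, psiDensity μ n t := by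
  have hIci : Ici (0 : ℝ) = ⋃ k : ℕ, Icc 0 (k : ℝ) := by
    ext x
    simp only [mem_Ici, mem_iUnion, mem_Icc]
    exact ⟨fun hx => (exists_nat_ge x).imp fun _ hk => ⟨hx, hk⟩, fun ⟨_, hx, _⟩ => hx⟩
  have hmono : Monotone fun k : ℕ => Dmu μ n k := (Dmu_mono μ n).comp Nat.mono_cast
  rw [hIci, ← iUnion_Ico_toReal_of_monotone (Dmu_mono μ n) hsup,
    setLIntegral_iUnion_of_directed _ (Monotone.directed_le fun _ _ h =>
      Icc_subset_Icc le_rfl (Nat.mono_cast h)),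
    setLIntegral_iUnion_of_directed _ (Monotone.directed_le fun _ _ h =>
      Ico_subset_Ico le_rfl (ENNReal.toReal_mono (Dmu_ne_top μ n hsupp _) (hmono h)))]
  exact iSup_congr fun k => setLIntegral_Icc_psiPlusIntegrand μ n hsupp hn k

end Branches

theorem psiMinus_eq_psiPlus_comp_general
    (μ n : MeasureTheory.Measure ℝ) [MeasureTheory.IsProbabilityMeasure μ]
    (hatomless : ∀ x : ℝ, μ {x} = 0)
    (hnfin : ∀ s : ℝ, 0 < s → n (Set.Ici s) < ⊤ ∧ n (Set.Iic (-s)) < ⊤)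
    (hnsupp : ∀ x ∈ measSupport μ, 0 < n (Set.Iic x) ∧ 0 < n (Set.Ici x))
    (hcompat : (⨆ y : ℝ, Dmu μ n y) = (⨆ x : ℝ, Gmu μ n x))
    :
    ∀ z : ℝ, 0 ≤ z →
      psiMinus μ n z =
        ∫⁻ s in (if (DinvSet μ n (Gmu μ n (-z))).Nonempty
                 then Set.Ico (0 : ℝ) (sInf (DinvSet μ n (Gmu μ n (-z))))
                 else Set.Ici (0 : ℝ)),
          psiPlusIntegrand μ n s ∂μ := by
  intro z _
  have : NullSingletonClass μ := ⟨hatomless⟩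
  have hsuppD : ∀ x ∈ μ.support, 0 < n (Ici x) := fun x hx =>
    (hnsupp x (measSupport_eq_support μ ▸ hx)).2
  have hsuppG : ∀ x ∈ μ.support, 0 < n (Iic x) := fun x hx =>
    (hnsupp x (measSupport_eq_support μ ▸ hx)).1
  have hnD : ∀ u, 0 < u → n (Ici u) ≠ ⊤ := fun u hu => (hnfin u hu).1.ne
  have hnG : ∀ u < 0, n (Iic u) ≠ ⊤ := fun u hu => by
    simpa using (hnfin (-u) (neg_pos.2 hu)).2.ne
  rw [psiMinus_eq_setLIntegral_psiDensity μ n hsuppG hnG]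
  split_ifs with hS
  · rw [setLIntegral_congr (Ico_ae_eq_Icc (μ := μ)),
      setLIntegral_Icc_psiPlusIntegrand μ n hsuppD hnD,
      Dmu_sInf_DinvSet μ n (continuous_setLIntegral_Icc (Dmu_ne_top μ n hsuppD)) hS]
  · have hv : Gmu μ n (-z) = ⨆ y, Dmu μ n y := by
      refine le_antisymm (hcompat ▸ le_iSup _ (-z)) (iSup_le fun y => ?_)
      exact (Dmu_mono μ n (le_max_left y 0)).trans
        (not_lt.1 fun h => hS ⟨max y 0, le_max_right y 0, h⟩)
    rw [setLIntegral_Ici_psiPlusIntegrand μ n hsuppD hnD (hv ▸ Gmu_ne_top μ n hsuppG _), hv]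

/-- Compatibility of the two branches: for every `z ≥ 0`,
`ψ₋(z) = ∫_{[0, D_μ⁻¹(G_μ(−z)))} [n([s,∞)) · (1 + μ̄(s) − μ̄(G_μ⁻¹(D_μ(s))))]⁻¹ dμ(s)`,
that is `ψ₋(z) = ψ₊(D_μ⁻¹(G_μ(−z)))`, where `ψ₊(∞)` denotes the integral of the
`ψ₊`-integrand over all of `[0,∞)` (case `D_μ⁻¹(G_μ(−z)) = ∞`, i.e. the set
`{y ≥ 0 : D_μ(y) > G_μ(−z)}` is empty). -/
theorem psiMinus_eq_psiPlus_comp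
    (μ n : MeasureTheory.Measure ℝ) [MeasureTheory.IsProbabilityMeasure μ]
    (hatomless : ∀ x : ℝ, μ {x} = 0)
    (hneg : 0 < μ (Set.Iio (0 : ℝ))) (hpos : 0 < μ (Set.Ioi (0 : ℝ)))
    (hnfin : ∀ s : ℝ, 0 < s → n (Set.Ici s) < ⊤ ∧ n (Set.Iic (-s)) < ⊤)
    (hnsupp : ∀ x ∈ measSupport μ, 0 < n (Set.Iic x) ∧ 0 < n (Set.Ici x))
    (hcompat : (⨆ y : ℝ, Dmu μ n y) = (⨆ x : ℝ, Gmu μ n x))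
    :
    ∀ z : ℝ, 0 ≤ z →
      psiMinus μ n z =
        ∫⁻ s in (if (DinvSet μ n (Gmu μ n (-z))).Nonempty
                 then Set.Ico (0 : ℝ) (sInf (DinvSet μ n (Gmu μ n (-z))))
                 else Set.Ici (0 : ℝ)),
          psiPlusIntegrand μ n s ∂μ :=
  psiMinus_eq_psiPlus_comp_general μ n hatomless hnfin hnsupp hcompat
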